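/- arXiv:1310.8646 — 2 statements merged into one kernel-verified Lean document; each statement's English description precedes it below -/
import Mathlib

section
/- The homomorphism β : G(Γ) → G(Γ'') (with β(s) = s for s ∈ V_fin and β(s) = (s,1)·(s,0) for s ∈ V_inf) is injective. -/
open Pointwise

/-- Relations of the graph product of cyclic groups: `s ^ n = 1` whenever the label of
`s` is the finite value `n`, and commutators of generators joined by an edge. -/
def graphProductRels {V : Type*} (Γ : SimpleGraph V) (c : V → ℕ∞) : Set (FreeGroup V) :=
  {r | (∃ (s : V) (n : ℕ), c s = (n : ℕ∞) ∧ r = FreeGroup.of s ^ n) ∨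
       (∃ s t : V, Γ.Adj s t ∧
         r = FreeGroup.of s * FreeGroup.of t * (FreeGroup.of s)⁻¹ * (FreeGroup.of t)⁻¹)}

/-- The graph product of cyclic groups associated to a graph `Γ` with labeling `c`. -/
abbrev GraphProduct {V : Type*} (Γ : SimpleGraph V) (c : V → ℕ∞) : Type _ :=
  PresentedGroup (graphProductRels Γ c)

/-- The generator of `GraphProduct Γ c` corresponding to a vertex `s`. -/
def gpGen {V : Type*} (Γ : SimpleGraph V) (c : V → ℕ∞) (s : V) : GraphProduct Γ c :=
  PresentedGroup.of s

/-- The element of the graph product represented by a word `(s₁^{e₁}, …, s_k^{e_k})`. -/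
def wordProd {V : Type*} (Γ : SimpleGraph V) (c : V → ℕ∞) (w : List (V × ℤ)) :
    GraphProduct Γ c :=
  (w.map (fun p => gpGen Γ c p.1 ^ p.2)).prod

/-- The elementary moves on words: deleting a letter that is trivial in the vertex group,
merging consecutive powers of the same generator, and swapping consecutive letters whose
generators are joined by an edge. -/
inductive GPMove {V : Type*} (Γ : SimpleGraph V) (c : V → ℕ∞) :
    List (V × ℤ) → List (V × ℤ) → Prop
  | del (w₁ w₂ : List (V × ℤ)) (s : V) (e : ℤ) (h : gpGen Γ c s ^ e = 1) :
      GPMove Γ c (w₁ ++ (s, e) :: w₂) (w₁ ++ w₂)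
  | merge (w₁ w₂ : List (V × ℤ)) (s : V) (a b : ℤ) :
      GPMove Γ c (w₁ ++ (s, a) :: (s, b) :: w₂) (w₁ ++ (s, a + b) :: w₂)
  | swap (w₁ w₂ : List (V × ℤ)) (s t : V) (a b : ℤ) (h : Γ.Adj s t) :
      GPMove Γ c (w₁ ++ (s, a) :: (t, b) :: w₂) (w₁ ++ (t, b) :: (s, a) :: w₂)

/-- A word is reduced if it cannot be shortened by any sequence of elementary moves. -/
def GPReduced {V : Type*} (Γ : SimpleGraph V) (c : V → ℕ∞) (w : List (V × ℤ)) : Prop :=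
  ∀ w', Relation.ReflTransGen (GPMove Γ c) w w' → w.length ≤ w'.length

/-- The length of a word: infinite-order letters count with the absolute value of their
exponent, finite-order letters count once. -/
def wordLen {V : Type*} (c : V → ℕ∞) (w : List (V × ℤ)) : ℕ :=
  (w.map (fun p => if c p.1 = ⊤ then p.2.natAbs else 1)).sum

/-- The length of a group element: the minimum of the lengths of words representing it. -/
noncomputable def elLen {V : Type*} (Γ : SimpleGraph V) (c : V → ℕ∞)
    (g : GraphProduct Γ c) : ℕ :=
  sInf {n | ∃ w, wordProd Γ c w = g ∧ wordLen c w = n}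

/-- `g` ends with the generator `s`. -/
def EndsWith {V : Type*} (Γ : SimpleGraph V) (c : V → ℕ∞) (g : GraphProduct Γ c)
    (s : V) : Prop :=
  ∃ (w : List (V × ℤ)) (e : ℤ), GPReduced Γ c (w ++ [(s, e)]) ∧
    wordProd Γ c (w ++ [(s, e)]) = g

/-- The vertices of `Γ` with finite label. -/
def Vfin {V : Type*} (c : V → ℕ∞) := {s : V // c s ≠ ⊤}

/-- The vertices of `Γ` with infinite label. -/
def Vinf {V : Type*} (c : V → ℕ∞) := {s : V // c s = ⊤}

/-- Vertex set of the Davis–Januszkiewicz graph `Γ''`: `V_fin ∪ (V_inf × {0,1})`,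
where `true` encodes `1` and `false` encodes `0`. -/
def DJVert {V : Type*} (c : V → ℕ∞) := Vfin c ⊕ (Vinf c × Bool)

/-- The graph `Γ''`: the subgraph on `V_fin ∪ (V_inf × {1})` is a copy of `Γ`, and
each `(v,0)` is joined to every other vertex except `(v,1)`. -/
def DJGraph {V : Type*} (Γ : SimpleGraph V) (c : V → ℕ∞) : SimpleGraph (DJVert c) :=
  SimpleGraph.fromRel (fun x y =>
    match x, y with
    | Sum.inl s, Sum.inl t => Γ.Adj s.1 t.1
    | Sum.inl s, Sum.inr (t, b) => if b then Γ.Adj s.1 t.1 else True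
    | Sum.inr (t, b), Sum.inl s => if b then Γ.Adj s.1 t.1 else True
    | Sum.inr (s, a), Sum.inr (t, b) =>
        if a = true ∧ b = true then Γ.Adj s.1 t.1 else s.1 ≠ t.1)

/-- Labels of `Γ''`: vertices of `V_fin` keep their label, the new vertices are
labeled `2`. -/
def DJLabel {V : Type*} (c : V → ℕ∞) : DJVert c → ℕ∞
  | Sum.inl s => c s.1
  | Sum.inr _ => 2

/-- The graph product `G(Γ'')`. -/
abbrev GPdj {V : Type*} (Γ : SimpleGraph V) (c : V → ℕ∞) : Type _ :=
  GraphProduct (DJGraph Γ c) (DJLabel c)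

/-- The generator of `G(Γ'')` corresponding to `s ∈ V_fin`. -/
def genFin {V : Type*} (Γ : SimpleGraph V) (c : V → ℕ∞) (s : Vfin c) : GPdj Γ c :=
  gpGen (DJGraph Γ c) (DJLabel c) (Sum.inl s)

/-- The generator of `G(Γ'')` corresponding to `(s,1)`, `s ∈ V_inf`. -/
def genA {V : Type*} (Γ : SimpleGraph V) (c : V → ℕ∞) (s : Vinf c) : GPdj Γ c :=
  gpGen (DJGraph Γ c) (DJLabel c) (Sum.inr (s, true))

/-- The generator of `G(Γ'')` corresponding to `(s,0)`, `s ∈ V_inf`. -/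
def genR {V : Type*} (Γ : SimpleGraph V) (c : V → ℕ∞) (s : Vinf c) : GPdj Γ c :=
  gpGen (DJGraph Γ c) (DJLabel c) (Sum.inr (s, false))

/-- `φ` is the homomorphism `β`, determined by `β(s) = s` for `s ∈ V_fin` and
`β(s) = (s,1)·(s,0)` for `s ∈ V_inf`. -/
def BetaSpec {V : Type*} (Γ : SimpleGraph V) (c : V → ℕ∞)
    (φ : GraphProduct Γ c →* GPdj Γ c) : Prop :=
  (∀ (s : V) (h : c s ≠ ⊤), φ (gpGen Γ c s) = genFin Γ c ⟨s, h⟩) ∧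
  (∀ (s : V) (h : c s = ⊤), φ (gpGen Γ c s) = genA Γ c ⟨s, h⟩ * genR Γ c ⟨s, h⟩)

/-- The subgroup `E` of `G(Γ'')` generated by the elements `(s,0)`, `s ∈ V_inf`. -/
def Esub {V : Type*} (Γ : SimpleGraph V) (c : V → ℕ∞) : Subgroup (GPdj Γ c) :=
  Subgroup.closure (Set.range (genR Γ c))

/-! Send `G(Γ'')` to the semidirect product `G(Γ) ⋊ {±1}^V`, where a sign vector `ε` acts by
`s ↦ s ^ ε s`: a vertex `s ∈ V_fin` goes to `s`, `(s,0)` to the sign vector `δ_s` that is `-1`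
exactly at `s`, and `(s,1)` to `s δ_s`. Both `δ_s` and `s δ_s` are involutions, and the images of
adjacent vertices of `Γ''` commute because `δ_s` fixes every generator other than `s`. The
composite with `β` maps `s ∈ V_inf` to `s δ_s δ_s = s`, so it is the inclusion of the normal
factor `G(Γ)`, which is injective; hence so is `β`. -/

theorem Vfin.val_ne_Vinf_val {V : Type*} {c : V → ℕ∞} (s : Vfin c) (t : Vinf c) :
    s.1 ≠ t.1 :=
  fun h => s.2 (h ▸ t.2)

namespace GraphProduct

open SemidirectProduct

variable {V : Type*} {Γ : SimpleGraph V} {c : V → ℕ∞}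

theorem gpGen_pow_of_label_eq {s : V} {n : ℕ} (h : c s = n) : gpGen Γ c s ^ n = 1 := by
  have hr : FreeGroup.of s ^ n ∈ graphProductRels Γ c := Or.inl ⟨s, n, h, rfl⟩
  simpa [gpGen, PresentedGroup.of] using PresentedGroup.one_of_mem hr

theorem commute_gpGen_of_adj {s t : V} (h : Γ.Adj s t) :
    Commute (gpGen Γ c s) (gpGen Γ c t) := by
  have hr : FreeGroup.of s * FreeGroup.of t * (FreeGroup.of s)⁻¹ * (FreeGroup.of t)⁻¹ ∈
      graphProductRels Γ c := Or.inr ⟨s, t, h, rfl⟩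
  have h1 := PresentedGroup.one_of_mem hr
  simp only [map_mul, map_inv] at h1
  exact commutatorElement_eq_one_iff_commute.mp h1

section Lift

variable {G : Type*} [Group G]

def lift (f : V → G) (hpow : ∀ s (n : ℕ), c s = n → f s ^ n = 1)
    (hcomm : ∀ s t, Γ.Adj s t → Commute (f s) (f t)) : GraphProduct Γ c →* G :=
  PresentedGroup.toGroup (f := f) <| by
    rintro r (⟨s, n, hn, rfl⟩ | ⟨s, t, hst, rfl⟩)
    · simpa using hpow s n hn
    · simpa [← commutatorElement_def] using
        commutatorElement_eq_one_iff_commute.mpr (hcomm s t hst)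

theorem lift_gpGen (f : V → G) (hpow : ∀ s (n : ℕ), c s = n → f s ^ n = 1)
    (hcomm : ∀ s t, Γ.Adj s t → Commute (f s) (f t)) (s : V) :
    lift f hpow hcomm (gpGen Γ c s) = f s :=
  PresentedGroup.toGroup.of _

theorem hom_ext {φ ψ : GraphProduct Γ c →* G}
    (h : ∀ s, φ (gpGen Γ c s) = ψ (gpGen Γ c s)) : φ = ψ :=
  PresentedGroup.ext h

end Lift

section SignFlip

def signFlip (u : V → ℤˣ) : GraphProduct Γ c →* GraphProduct Γ c :=
  lift (fun s => gpGen Γ c s ^ (u s : ℤ))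
    (fun s n hn => by rw [← zpow_natCast, ← zpow_mul, mul_comm, zpow_mul, zpow_natCast,
      gpGen_pow_of_label_eq hn, one_zpow])
    (fun _ _ hst => (commute_gpGen_of_adj hst).zpow_zpow _ _)

theorem signFlip_gpGen (u : V → ℤˣ) (s : V) :
    signFlip u (gpGen Γ c s) = gpGen Γ c s ^ (u s : ℤ) :=
  lift_gpGen ..

theorem signFlip_mul (u v : V → ℤˣ) :
    signFlip (Γ := Γ) (c := c) (u * v) = (signFlip u).comp (signFlip v) :=
  hom_ext fun s => by
    simp only [MonoidHom.comp_apply, signFlip_gpGen, map_zpow, ← zpow_mul, Pi.mul_apply,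
      Units.val_mul]

theorem signFlip_one : signFlip (Γ := Γ) (c := c) 1 = MonoidHom.id _ :=
  hom_ext fun s => by simp [signFlip_gpGen]

def signFlipAut : (V → ℤˣ) →* MulAut (GraphProduct Γ c) where
  toFun u := (signFlip u).toMulEquiv (signFlip u⁻¹)
    (by rw [← signFlip_mul, inv_mul_cancel, signFlip_one])
    (by rw [← signFlip_mul, mul_inv_cancel, signFlip_one])
  map_one' := MulEquiv.ext fun g => by simp [signFlip_one]
  map_mul' u v := MulEquiv.ext fun g => by simp [signFlip_mul]

theorem signFlipAut_apply (u : V → ℤˣ) (g : GraphProduct Γ c) :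
    signFlipAut u g = signFlip u g := rfl

abbrev SignSemidirect (Γ : SimpleGraph V) (c : V → ℕ∞) :=
  GraphProduct Γ c ⋊[signFlipAut] (V → ℤˣ)

variable [DecidableEq V]

def negAt (s : V) : V → ℤˣ := Pi.mulSingle s (-1)

theorem negAt_mul_self (s : V) : negAt s * negAt s = 1 := by
  rw [negAt, ← Pi.mulSingle_mul, Int.units_mul_self, Pi.mulSingle_one]

theorem inr_negAt_mul_inl_gpGen (s t : V) :
    (inr (negAt s) * inl (gpGen Γ c t) : SignSemidirect Γ c) =
      inl (gpGen Γ c t ^ (negAt s t : ℤ)) * inr (negAt s) := by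
  rw [← signFlip_gpGen, ← signFlipAut_apply, inl_aut, map_inv, inv_mul_cancel_right]

theorem commute_inr_negAt_inl_gpGen {s t : V} (h : t ≠ s) :
    Commute (inr (negAt s) : SignSemidirect Γ c) (inl (gpGen Γ c t)) := by
  rw [Commute, SemiconjBy, inr_negAt_mul_inl_gpGen, negAt, Pi.mulSingle_eq_of_ne h,
    Units.val_one, zpow_one]

theorem inr_negAt_sq (s : V) : (inr (negAt s) : SignSemidirect Γ c) ^ 2 = 1 := by
  rw [sq, ← map_mul, negAt_mul_self, map_one]

theorem inl_gpGen_mul_inr_negAt_sq (s : V) :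
    (inl (gpGen Γ c s) * inr (negAt s) : SignSemidirect Γ c) ^ 2 = 1 := by
  rw [sq, mul_assoc, ← mul_assoc (inr _), inr_negAt_mul_inl_gpGen, negAt, Pi.mulSingle_eq_same,
    Units.val_neg, Units.val_one, zpow_neg_one, mul_assoc, ← negAt, ← sq, inr_negAt_sq, mul_one,
    ← map_mul, mul_inv_cancel, map_one]

end SignFlip

section DavisJanuszkiewicz

variable [DecidableEq V]

def djImage : DJVert c → SignSemidirect Γ c
  | .inl s => inl (gpGen Γ c s.1)
  | .inr (s, true) => inl (gpGen Γ c s.1) * inr (negAt s.1)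
  | .inr (s, false) => inr (negAt s.1)

theorem djImage_pow_of_label_eq (x : DJVert c) {n : ℕ} (h : DJLabel c x = n) :
    djImage (Γ := Γ) x ^ n = 1 := by
  rcases x with s | ⟨s, _ | _⟩
  · rw [djImage, ← map_pow, gpGen_pow_of_label_eq (show c s.1 = n from h), map_one]
  all_goals
    obtain rfl : n = 2 := (Nat.cast_injective (show ((2 : ℕ) : ℕ∞) = n from h)).symm
  · exact inr_negAt_sq s.1
  · exact inl_gpGen_mul_inr_negAt_sq s.1

theorem commute_djImage_of_adj {x y : DJVert c} (h : (DJGraph Γ c).Adj x y) :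
    Commute (djImage (Γ := Γ) x) (djImage y) := by
  have hA {s t : V} (h : Γ.Adj s t) :=
    (commute_gpGen_of_adj (c := c) h).map (inl (φ := signFlipAut))
  have hB {s t : V} (h : t ≠ s) := commute_inr_negAt_inl_gpGen (Γ := Γ) (c := c) h
  have hC (s t : V) : Commute (inr (negAt s) : SignSemidirect Γ c) (inr (negAt t)) :=
    (Commute.all _ _).map inr
  replace h := ((SimpleGraph.fromRel_adj _ _ _).mp h).2
  rcases x with s | ⟨s, _ | _⟩ <;> rcases y with t | ⟨t, _ | _⟩ <;>
    simp only [Bool.false_eq_true, ↓reduceIte, ne_eq, and_self, and_true, and_false,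
      eq_comm (a := t.1), Γ.adj_comm t.1 s.1, or_self] at h
  · exact hA h
  · exact (hB (Vfin.val_ne_Vinf_val s t)).symm
  · exact (hA h).mul_right (hB h.ne).symm
  · exact hB (Vfin.val_ne_Vinf_val t s)
  · exact hC s.1 t.1
  · exact (hB (Ne.symm h)).mul_right (hC s.1 t.1)
  · exact (hA h).mul_left (hB h.ne')
  · exact (hB h).symm.mul_left (hC s.1 t.1)
  · exact ((hA h).mul_right (hB h.ne).symm).mul_left ((hB h.ne').mul_right (hC s.1 t.1))

def toSignSemidirect : GPdj Γ c →* SignSemidirect Γ c :=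
  lift djImage (fun x _ => djImage_pow_of_label_eq x) (fun _ _ => commute_djImage_of_adj)

theorem toSignSemidirect_genFin (s : Vfin c) :
    toSignSemidirect (genFin Γ c s) = inl (gpGen Γ c s.1) :=
  lift_gpGen ..

theorem toSignSemidirect_genA (s : Vinf c) :
    toSignSemidirect (genA Γ c s) = inl (gpGen Γ c s.1) * inr (negAt s.1) :=
  lift_gpGen ..

theorem toSignSemidirect_genR (s : Vinf c) :
    toSignSemidirect (genR Γ c s) = (inr (negAt s.1) : SignSemidirect Γ c) :=
  lift_gpGen ..

theorem toSignSemidirect_comp_of_betaSpec {φ : GraphProduct Γ c →* GPdj Γ c}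
    (hφ : BetaSpec Γ c φ) : toSignSemidirect.comp φ = inl := by
  refine hom_ext fun s => ?_
  by_cases hs : c s = ⊤
  · rw [MonoidHom.comp_apply, hφ.2 s hs, map_mul, toSignSemidirect_genA ⟨s, hs⟩,
      toSignSemidirect_genR ⟨s, hs⟩, mul_assoc, ← sq, inr_negAt_sq, mul_one]
  · rw [MonoidHom.comp_apply, hφ.1 s hs, toSignSemidirect_genFin ⟨s, hs⟩]

end DavisJanuszkiewicz

end GraphProduct

theorem beta_injective_general {V : Type*}
    (Γ : SimpleGraph V) (c : V → ℕ∞) (φ : GraphProduct Γ c →* GPdj Γ c)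
    (hφ : BetaSpec Γ c φ) :
    Function.Injective φ := by
  classical
  refine Function.Injective.of_comp (f := GraphProduct.toSignSemidirect) ?_
  rw [← MonoidHom.coe_comp, GraphProduct.toSignSemidirect_comp_of_betaSpec hφ]
  exact SemidirectProduct.inl_injective

/-- the homomorphism `β : G(Γ) → G(Γ'')` is injective. -/
theorem beta_injective {V : Type*} [Fintype V] [DecidableEq V]
    (Γ : SimpleGraph V) (c : V → ℕ∞) (φ : GraphProduct Γ c →* GPdj Γ c)
    (hφ : BetaSpec Γ c φ) :
    Function.Injective φ :=
  beta_injective_general Γ c φ hφ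
end

section
/- If g ∈ G(Γ) and s ∈ V_inf is such that g does not end with s⁻¹ (i.e., no reduced word for g has last letter a negative power of s), then ℓ(gs) = ℓ(g) + 1, where ℓ is the word length with respect to the generating set consisting of all elements of the finite vertex groups together with s^{±1} for s ∈ V_inf. -/
/-! Take a shortest word `u` for `g s` and reduce the word `u s⁻¹`, which represents `g`.
Along any sequence of elementary moves, either the appended letter survives as a negative power
of `s` followed only by letters commuting with `s`, or the length has dropped by at least two.
In the first case it can be swapped to the end of the reduced word, so `g` ends with `s⁻¹`; in
the second `ℓ(g) ≤ ℓ(gs) - 1`. As `s` has infinite order, the negative letter cannot be deleted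
outright: only merging it with a positive power of `s` destroys it, and that costs length two. -/

open Pointwise

/-- `g` ends with a negative power of `s`: some reduced word representing `g` has
last letter `s^e` with `e < 0`. -/
def EndsWithNeg {V : Type*} (Γ : SimpleGraph V) (c : V → ℕ∞)
    (g : GraphProduct Γ c) (s : V) : Prop :=
  ∃ (w : List (V × ℤ)) (e : ℤ), e < 0 ∧ GPReduced Γ c (w ++ [(s, e)]) ∧
    wordProd Γ c (w ++ [(s, e)]) = g

theorem List.append_cons_eq_append_cons_cases {α : Type*} {l₁ l₂ l₃ l₄ : List α} {a b : α}
    (h : l₁ ++ a :: l₂ = l₃ ++ b :: l₄) :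
    (∃ m, l₃ = l₁ ++ a :: m ∧ l₂ = m ++ b :: l₄) ∨ (l₁ = l₃ ∧ a = b ∧ l₂ = l₄) ∨
      (∃ m, l₁ = l₃ ++ b :: m ∧ l₄ = m ++ a :: l₂) := by
  rcases List.append_eq_append_iff.mp h with ⟨m, rfl, hm⟩ | ⟨m, rfl, hm⟩
  · rcases List.cons_eq_append_iff.mp hm with ⟨rfl, hab⟩ | ⟨m', rfl, rfl⟩
    · simp_all
    · exact .inl ⟨m', rfl, rfl⟩
  · rcases List.cons_eq_append_iff.mp hm with ⟨rfl, hab⟩ | ⟨m', rfl, rfl⟩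
    · simp_all
    · exact .inr (.inr ⟨m', rfl, rfl⟩)

section Words

variable {V : Type*} {Γ : SimpleGraph V} {c : V → ℕ∞}

@[simp]
theorem wordProd_nil : wordProd Γ c [] = 1 := rfl

@[simp]
theorem wordProd_cons (p : V × ℤ) (w : List (V × ℤ)) :
    wordProd Γ c (p :: w) = gpGen Γ c p.1 ^ p.2 * wordProd Γ c w := by
  simp [wordProd]

@[simp]
theorem wordProd_append (w₁ w₂ : List (V × ℤ)) :
    wordProd Γ c (w₁ ++ w₂) = wordProd Γ c w₁ * wordProd Γ c w₂ := by
  simp [wordProd]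

@[simp]
theorem wordLen_nil : wordLen c [] = 0 := rfl

@[simp]
theorem wordLen_cons (p : V × ℤ) (w : List (V × ℤ)) :
    wordLen c (p :: w) = (if c p.1 = ⊤ then p.2.natAbs else 1) + wordLen c w := by
  simp [wordLen]

@[simp]
theorem wordLen_append (w₁ w₂ : List (V × ℤ)) :
    wordLen c (w₁ ++ w₂) = wordLen c w₁ + wordLen c w₂ := by
  simp [wordLen]

theorem exists_wordProd_eq (g : GraphProduct Γ c) : ∃ w, wordProd Γ c w = g := by
  induction g using PresentedGroup.induction_on with
  | H z =>
    induction z using FreeGroup.induction_on with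
    | C1 => exact ⟨[], rfl⟩
    | of x => exact ⟨[(x, 1)], by simp; rfl⟩
    | inv_of x _ => exact ⟨[(x, -1)], by simp; rfl⟩
    | mul x y hx hy =>
      obtain ⟨wx, hwx⟩ := hx
      obtain ⟨wy, hwy⟩ := hy
      exact ⟨wx ++ wy, by rw [wordProd_append, hwx, hwy, map_mul]⟩

theorem elLen_le_wordLen {g : GraphProduct Γ c} {w : List (V × ℤ)} (hw : wordProd Γ c w = g) :
    elLen Γ c g ≤ wordLen c w :=
  Nat.sInf_le ⟨w, hw, rfl⟩

theorem exists_wordLen_eq_elLen (g : GraphProduct Γ c) :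
    ∃ w, wordProd Γ c w = g ∧ wordLen c w = elLen Γ c g := by
  obtain ⟨w, hw⟩ := exists_wordProd_eq g
  exact Nat.sInf_mem (s := {n | ∃ w, wordProd Γ c w = g ∧ wordLen c w = n}) ⟨_, w, hw, rfl⟩

theorem elLen_mul_gpGen_le (g : GraphProduct Γ c) (s : V) :
    elLen Γ c (g * gpGen Γ c s) ≤ elLen Γ c g + 1 := by
  obtain ⟨w, rfl, hw⟩ := exists_wordLen_eq_elLen g
  calc elLen Γ c (wordProd Γ c w * gpGen Γ c s)
      ≤ wordLen c (w ++ [(s, 1)]) := elLen_le_wordLen (by simp)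
    _ = elLen Γ c (wordProd Γ c w) + 1 := by simp [hw]

theorem gpGen_commute {s t : V} (h : Γ.Adj s t) : Commute (gpGen Γ c s) (gpGen Γ c t) := by
  have := PresentedGroup.one_of_mem (rels := graphProductRels Γ c) (Or.inr ⟨s, t, h, rfl⟩)
  simp only [map_mul, map_inv] at this
  exact commutatorElement_eq_one_iff_commute.mp this

theorem gpGen_zpow_ne_one {s : V} (hs : c s = ⊤) {e : ℤ} (he : e ≠ 0) :
    gpGen Γ c s ^ e ≠ 1 := by
  classical
  -- the exponent sum of `s` is well defined, since no relation involves a power of `s` alone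
  let f : V → Multiplicative ℤ := fun t => if t = s then .ofAdd 1 else 1
  have hrels : ∀ r ∈ graphProductRels Γ c, FreeGroup.lift f r = 1 := by
    rintro r (⟨t, n, hn, rfl⟩ | ⟨t, u, -, rfl⟩)
    · have ht : t ≠ s := by rintro rfl; simp [hs] at hn
      simp [f, ht]
    · simp [mul_comm (f t) (f u)]
  intro h
  have := congrArg (PresentedGroup.toGroup hrels) h
  simp [gpGen, PresentedGroup.toGroup.of, f, he] at this

theorem GPMove.wordProd_eq {w w' : List (V × ℤ)} (m : GPMove Γ c w w') :
    wordProd Γ c w' = wordProd Γ c w := by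
  induction m with
  | del w₁ w₂ s e h => simp [h]
  | merge w₁ w₂ s a b => simp [zpow_add, mul_assoc]
  | swap w₁ w₂ s t a b h => simp [← mul_assoc, ((gpGen_commute h).zpow_zpow a b).eq]

theorem GPMove.wordLen_le {w w' : List (V × ℤ)} (m : GPMove Γ c w w') :
    wordLen c w' ≤ wordLen c w := by
  induction m with
  | del w₁ w₂ s e h => simp
  | merge w₁ w₂ s a b => simp only [wordLen_append, wordLen_cons]; split <;> omega
  | swap w₁ w₂ s t a b h => simp only [wordLen_append, wordLen_cons]; omega

theorem wordProd_eq_of_reflTransGen {w w' : List (V × ℤ)}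
    (h : Relation.ReflTransGen (GPMove Γ c) w w') : wordProd Γ c w' = wordProd Γ c w := by
  induction h with
  | refl => rfl
  | tail _ m ih => rw [m.wordProd_eq, ih]

theorem wordLen_le_of_reflTransGen {w w' : List (V × ℤ)}
    (h : Relation.ReflTransGen (GPMove Γ c) w w') : wordLen c w' ≤ wordLen c w := by
  induction h with
  | refl => exact le_rfl
  | tail _ m ih => exact m.wordLen_le.trans ih

theorem exists_reflTransGen_gpReduced (w : List (V × ℤ)) :
    ∃ r, Relation.ReflTransGen (GPMove Γ c) w r ∧ GPReduced Γ c r := by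
  by_cases hw : GPReduced Γ c w
  · exact ⟨w, .refl, hw⟩
  · obtain ⟨w', hww', hlen⟩ : ∃ w', Relation.ReflTransGen (GPMove Γ c) w w' ∧
        w'.length < w.length := by simpa [GPReduced] using hw
    obtain ⟨r, hw'r, hr⟩ := exists_reflTransGen_gpReduced w'
    exact ⟨r, hww'.trans hw'r, hr⟩
termination_by w.length

theorem GPReduced.of_reflTransGen {w w' : List (V × ℤ)} (hw : GPReduced Γ c w)
    (h : Relation.ReflTransGen (GPMove Γ c) w w') (hlen : w'.length ≤ w.length) :
    GPReduced Γ c w' :=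
  fun _ h' => hlen.trans (hw _ (h.trans h'))

theorem reflTransGen_swap_to_end {s : V} (e : ℤ) :
    ∀ (A B : List (V × ℤ)), (∀ p ∈ B, Γ.Adj s p.1) →
      Relation.ReflTransGen (GPMove Γ c) (A ++ (s, e) :: B) (A ++ B ++ [(s, e)])
  | A, [], _ => by simpa using .refl
  | A, q :: B, hB => by
    have rest := reflTransGen_swap_to_end e (A ++ [q]) B fun p hp => hB p (.tail _ hp)
    simp only [List.append_assoc, List.cons_append, List.nil_append] at rest ⊢
    exact .head (GPMove.swap A B s q.1 e q.2 (hB q List.mem_cons_self)) rest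

end Words

section NegLetter

variable {V : Type*} {Γ : SimpleGraph V} {c : V → ℕ∞}

def NegLetterCommutesToEnd (Γ : SimpleGraph V) (s : V) (w : List (V × ℤ)) : Prop :=
  ∃ (A : List (V × ℤ)) (e : ℤ) (B : List (V × ℤ)),
    w = A ++ (s, e) :: B ∧ e < 0 ∧ ∀ p ∈ B, Γ.Adj s p.1

variable {s : V} {w₁ w₂ : List (V × ℤ)}

theorem NegLetterCommutesToEnd.del (hs : c s = ⊤) {t : V} {f : ℤ}
    (hf : gpGen Γ c t ^ f = 1) (hw : NegLetterCommutesToEnd Γ s (w₁ ++ (t, f) :: w₂)) :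
    NegLetterCommutesToEnd Γ s (w₁ ++ w₂) := by
  obtain ⟨A, e, B, hw, he, hB⟩ := hw
  rcases List.append_cons_eq_append_cons_cases hw with
    ⟨m, rfl, rfl⟩ | ⟨-, hte, -⟩ | ⟨m, rfl, rfl⟩
  · exact ⟨w₁ ++ m, e, B, by simp, he, hB⟩
  · cases hte
    exact absurd hf (gpGen_zpow_ne_one hs he.ne)
  · refine ⟨A, e, m ++ w₂, by simp, he, ?_⟩
    simp only [List.forall_mem_append, List.forall_mem_cons] at hB ⊢
    tauto

theorem NegLetterCommutesToEnd.merge (hs : c s = ⊤) {t : V} {a b : ℤ}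
    (hw : NegLetterCommutesToEnd Γ s (w₁ ++ (t, a) :: (t, b) :: w₂)) :
    NegLetterCommutesToEnd Γ s (w₁ ++ (t, a + b) :: w₂) ∨
      wordLen c (w₁ ++ (t, a + b) :: w₂) + 2 ≤ wordLen c (w₁ ++ (t, a) :: (t, b) :: w₂) := by
  obtain ⟨A, e, B, hw, he, hB⟩ := hw
  rcases List.append_cons_eq_append_cons_cases hw with
    ⟨_ | ⟨q, m⟩, rfl, hm⟩ | ⟨-, hte, rfl⟩ | ⟨m, rfl, rfl⟩
  · -- the negative letter absorbs `t ^ a`; it disappears only if `a + b ≥ 0`, costing `2 |b|`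
    obtain ⟨⟨rfl, rfl⟩, rfl⟩ : ((t, b) = (s, e)) ∧ w₂ = B := by simpa using hm
    by_cases hab : a + b < 0
    · exact .inl ⟨w₁, a + b, w₂, rfl, hab, hB⟩
    · right
      simp only [wordLen_append, wordLen_cons, hs, if_true]
      omega
  · obtain ⟨rfl, rfl⟩ : (t, b) = q ∧ w₂ = m ++ (s, e) :: B := by simpa using hm
    exact .inl ⟨w₁ ++ (t, a + b) :: m, e, B, by simp, he, hB⟩
  · cases hte
    exact absurd (hB _ List.mem_cons_self) Γ.irrefl
  · refine .inl ⟨A, e, m ++ (t, a + b) :: w₂, by simp, he, ?_⟩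
    simp only [List.forall_mem_append, List.forall_mem_cons] at hB ⊢
    tauto

theorem NegLetterCommutesToEnd.swap {t u : V} {a b : ℤ} (htu : Γ.Adj t u)
    (hw : NegLetterCommutesToEnd Γ s (w₁ ++ (t, a) :: (u, b) :: w₂)) :
    NegLetterCommutesToEnd Γ s (w₁ ++ (u, b) :: (t, a) :: w₂) := by
  obtain ⟨A, e, B, hw, he, hB⟩ := hw
  rcases List.append_cons_eq_append_cons_cases hw with
    ⟨_ | ⟨q, m⟩, rfl, hm⟩ | ⟨-, hte, rfl⟩ | ⟨m, rfl, rfl⟩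
  · obtain ⟨⟨rfl, rfl⟩, rfl⟩ : ((u, b) = (s, e)) ∧ w₂ = B := by simpa using hm
    exact ⟨w₁, b, (t, a) :: w₂, rfl, he, List.forall_mem_cons.mpr ⟨htu.symm, hB⟩⟩
  · obtain ⟨rfl, rfl⟩ : (u, b) = q ∧ w₂ = m ++ (s, e) :: B := by simpa using hm
    exact ⟨w₁ ++ (u, b) :: (t, a) :: m, e, B, by simp, he, hB⟩
  · cases hte
    exact ⟨w₁ ++ [(u, b)], a, w₂, by simp, he, (List.forall_mem_cons.mp hB).2⟩
  · refine ⟨A, e, m ++ (u, b) :: (t, a) :: w₂, by simp, he, ?_⟩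
    simp only [List.forall_mem_append, List.forall_mem_cons] at hB ⊢
    tauto

theorem GPMove.negLetterCommutesToEnd_or_wordLen_add_two_le (hs : c s = ⊤)
    {w w' : List (V × ℤ)} (m : GPMove Γ c w w') (hw : NegLetterCommutesToEnd Γ s w) :
    NegLetterCommutesToEnd Γ s w' ∨ wordLen c w' + 2 ≤ wordLen c w := by
  cases m with
  | del _ _ _ _ h => exact .inl (hw.del hs h)
  | merge => exact hw.merge hs
  | swap _ _ _ _ _ _ h => exact .inl (hw.swap h)

theorem negLetterCommutesToEnd_or_wordLen_add_two_le_of_reflTransGen (hs : c s = ⊤)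
    {w w' : List (V × ℤ)} (h : Relation.ReflTransGen (GPMove Γ c) w w')
    (hw : NegLetterCommutesToEnd Γ s w) :
    NegLetterCommutesToEnd Γ s w' ∨ wordLen c w' + 2 ≤ wordLen c w := by
  induction h with
  | refl => exact .inl hw
  | tail h m ih =>
    rcases ih with hI | hlen
    · exact (m.negLetterCommutesToEnd_or_wordLen_add_two_le hs hI).imp_right
        (·.trans (wordLen_le_of_reflTransGen h))
    · exact .inr ((Nat.add_le_add_right m.wordLen_le 2).trans hlen)

theorem NegLetterCommutesToEnd.endsWithNeg {r : List (V × ℤ)} (hr : GPReduced Γ c r)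
    (hI : NegLetterCommutesToEnd Γ s r) : EndsWithNeg Γ c (wordProd Γ c r) s := by
  obtain ⟨A, e, B, rfl, he, hB⟩ := hI
  have h := reflTransGen_swap_to_end (c := c) e A B hB
  exact ⟨A ++ B, e, he, hr.of_reflTransGen h (by simp), wordProd_eq_of_reflTransGen h⟩

theorem elLen_add_one_le_elLen_mul_gpGen (hs : c s = ⊤) {g : GraphProduct Γ c}
    (h : ¬ EndsWithNeg Γ c g s) :
    elLen Γ c g + 1 ≤ elLen Γ c (g * gpGen Γ c s) := by
  obtain ⟨u, hu, hlen⟩ := exists_wordLen_eq_elLen (g * gpGen Γ c s)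
  obtain ⟨r, hur, hr⟩ := exists_reflTransGen_gpReduced (Γ := Γ) (u ++ [(s, -1)])
  have hprod : wordProd Γ c r = g := by
    rw [wordProd_eq_of_reflTransGen hur, wordProd_append, hu]
    simp
  have hI : NegLetterCommutesToEnd Γ s (u ++ [(s, -1)]) := ⟨u, -1, [], rfl, by simp, by simp⟩
  rcases negLetterCommutesToEnd_or_wordLen_add_two_le_of_reflTransGen hs hur hI with hend | hshort
  · exact absurd (hprod ▸ hend.endsWithNeg hr) h
  · have := elLen_le_wordLen hprod
    simp only [wordLen_append, wordLen_cons, hs, if_true, wordLen_nil] at hshort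
    omega

end NegLetter

theorem elLen_mul_gen_of_not_endsWithNeg_general {V : Type*}
    (Γ : SimpleGraph V) (c : V → ℕ∞) (s : V) (hs : c s = ⊤)
    (g : GraphProduct Γ c) (h : ¬ EndsWithNeg Γ c g s) :
    elLen Γ c (g * gpGen Γ c s) = elLen Γ c g + 1 :=
  (elLen_mul_gpGen_le g s).antisymm (elLen_add_one_le_elLen_mul_gpGen hs h)

/-- if `s ∈ V_inf` and `g` does not end with a negative power of `s`,
then `ℓ(gs) = ℓ(g) + 1`. -/
theorem elLen_mul_gen_of_not_endsWithNeg {V : Type*} [Fintype V] [DecidableEq V]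
    (Γ : SimpleGraph V) (c : V → ℕ∞) (s : V) (hs : c s = ⊤)
    (g : GraphProduct Γ c) (h : ¬ EndsWithNeg Γ c g s) :
    elLen Γ c (g * gpGen Γ c s) = elLen Γ c g + 1 :=
  elLen_mul_gen_of_not_endsWithNeg_general Γ c s hs g h
end
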